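/- There is an absolute constant C > 0 such that for every locally absolutely continuous f : (0,∞) → ℂ with ‖∂_r f‖_{L²} + ‖⟨log₋ r⟩^{-1} r^{-1} f‖_{L²} < ∞, one has sup_{r>0} ⟨log₋ r⟩^{-1/2} |f(r)| ≤ C ( ‖∂_r f‖_{L²} + ‖⟨log₋ r⟩^{-1} r^{-1} f‖_{L²} ). -/

import Mathlib

open MeasureTheory Set

/-- The `L²` norm with respect to the measure `2π r dr` on `(0,∞)`. -/
noncomputable def L2w (g : ℝ → ℂ) : ℝ :=
  Real.sqrt (2 * Real.pi * ∫ r in Set.Ioi (0:ℝ), ‖g r‖ ^ 2 * r)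

/-- The Japanese bracket `⟨x⟩ = (1+x²)^{1/2}`. -/
noncomputable def jap (x : ℝ) : ℝ := Real.sqrt (1 + x ^ 2)

/-- `log₋ r = max(−log r, 0)`. -/
noncomputable def logm (r : ℝ) : ℝ := max (-Real.log r) 0

/-- Local absolute continuity on `(0,∞)`, encoded via the fundamental theorem of calculus. -/
def LocAC (f : ℝ → ℂ) : Prop :=
  ∀ a b : ℝ, 0 < a → a ≤ b →
    IntegrableOn (deriv f) (Set.Icc a b) ∧
    ∀ x ∈ Set.Icc a b, f x = f a + ∫ t in a..x, deriv f t


/-! For `r > 0` put `c = max r 1`. On `[c, 2c]` the weight `⟨log₋ t⟩⁻¹ t⁻¹` is `t⁻¹` and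
`∫_c^{2c} dt / t = log 2`, so `|f|` at a minimum point `s ∈ [c, 2c]` is controlled by the
weighted norm of `f`. Cauchy–Schwarz against `t dt` gives
`|f s - f r| ≤ ‖∂_r f‖ (log (s / r))^{1/2}`, and `log (s / r) ≤ log 2 + log₋ r ≤ 2 ⟨log₋ r⟩`. -/

open Real

lemma integral_mul_le_sqrt_mul_sqrt {α : Type*} [MeasurableSpace α] {μ : Measure α}
    {F G : α → ℝ} (hF : 0 ≤ᵐ[μ] F) (hG : 0 ≤ᵐ[μ] G) (hF2 : MemLp F 2 μ) (hG2 : MemLp G 2 μ) :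
    ∫ a, F a * G a ∂μ ≤ √(∫ a, F a ^ 2 ∂μ) * √(∫ a, G a ^ 2 ∂μ) := by
  have h := integral_mul_le_Lp_mul_Lq_of_nonneg HolderConjugate.two_two hF hG
    (by simpa using hF2) (by simpa using hG2)
  simpa only [rpow_two, ← sqrt_eq_rpow] using h

section Ioc

variable {a b : ℝ}

lemma integrableOn_Ioc_inv (ha : 0 < a) : IntegrableOn (fun t => t⁻¹) (Ioc a b) :=
  (continuousOn_inv₀.mono fun _ ht => (ha.trans_le ht.1).ne').integrableOn_Icc.mono_set
    Ioc_subset_Icc_self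

lemma integral_Ioc_inv (ha : 0 < a) (hab : a ≤ b) : ∫ t in Ioc a b, t⁻¹ = log (b / a) := by
  rw [← intervalIntegral.integral_of_le hab, integral_inv_of_pos ha (ha.trans_le hab)]

lemma integral_norm_le_sqrt_mul_sqrt_log {E : Type*} [NormedAddCommGroup E] {g : ℝ → E}
    (ha : 0 < a) (hab : a ≤ b) (hg : AEStronglyMeasurable g (volume.restrict (Ioc a b)))
    (hg2 : IntegrableOn (fun t => ‖g t‖ ^ 2 * t) (Ioc a b)) :
    ∫ t in Ioc a b, ‖g t‖ ≤ √(∫ t in Ioc a b, ‖g t‖ ^ 2 * t) * √(log (b / a)) := by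
  set μ := volume.restrict (Ioc a b)
  have hpos : ∀ᵐ t ∂μ, 0 < t := by
    filter_upwards [ae_restrict_mem measurableSet_Ioc] with t ht using ha.trans ht.1
  have hF : (fun t => (‖g t‖ * √t) ^ 2) =ᵐ[μ] fun t => ‖g t‖ ^ 2 * t := by
    filter_upwards [hpos] with t ht
    rw [mul_pow, sq_sqrt ht.le]
  have hG : (fun t => (√t)⁻¹ ^ 2) =ᵐ[μ] fun t => t⁻¹ := by
    filter_upwards [hpos] with t ht
    rw [inv_pow, sq_sqrt ht.le]
  have hFG : (fun t => ‖g t‖ * √t * (√t)⁻¹) =ᵐ[μ] fun t => ‖g t‖ := by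
    filter_upwards [hpos] with t ht
    rw [mul_inv_cancel_right₀ (sqrt_pos.2 ht).ne']
  have hsqrt : AEStronglyMeasurable (fun t : ℝ => √t) μ := continuous_sqrt.aestronglyMeasurable
  have hsqrt_inv : AEStronglyMeasurable (fun t : ℝ => (√t)⁻¹) μ :=
    continuous_sqrt.measurable.inv.aestronglyMeasurable
  calc ∫ t in Ioc a b, ‖g t‖ = ∫ t in Ioc a b, ‖g t‖ * √t * (√t)⁻¹ :=
        (integral_congr_ae hFG).symm
    _ ≤ √(∫ t in Ioc a b, (‖g t‖ * √t) ^ 2) * √(∫ t in Ioc a b, (√t)⁻¹ ^ 2) :=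
      integral_mul_le_sqrt_mul_sqrt (ae_of_all _ fun _ => by positivity)
        (ae_of_all _ fun _ => by positivity)
        ((memLp_two_iff_integrable_sq (hg.norm.mul hsqrt)).2 ((integrable_congr hF).2 hg2))
        ((memLp_two_iff_integrable_sq hsqrt_inv).2
          ((integrable_congr hG).2 (integrableOn_Ioc_inv ha)))
    _ = √(∫ t in Ioc a b, ‖g t‖ ^ 2 * t) * √(log (b / a)) := by
      rw [integral_congr_ae hF, integral_congr_ae hG, integral_Ioc_inv ha hab]

lemma exists_sq_norm_mul_log_le_integral {E : Type*} [NormedAddCommGroup E] {f : ℝ → E}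
    (ha : 0 < a) (hab : a ≤ b) (hf : ContinuousOn f (Icc a b)) :
    ∃ s ∈ Icc a b, ‖f s‖ ^ 2 * log (b / a) ≤ ∫ t in Ioc a b, ‖f t‖ ^ 2 * t⁻¹ := by
  obtain ⟨s, hs, hmin⟩ := isCompact_Icc.exists_isMinOn (nonempty_Icc.2 hab) hf.norm
  have hcont : ContinuousOn (fun t => ‖f t‖ ^ 2 * t⁻¹) (Icc a b) :=
    (hf.norm.pow 2).mul (continuousOn_inv₀.mono fun _ ht => (ha.trans_le ht.1).ne')
  refine ⟨s, hs, ?_⟩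
  calc ‖f s‖ ^ 2 * log (b / a) = ∫ t in Ioc a b, ‖f s‖ ^ 2 * t⁻¹ := by
        rw [integral_const_mul, integral_Ioc_inv ha hab]
    _ ≤ ∫ t in Ioc a b, ‖f t‖ ^ 2 * t⁻¹ :=
      setIntegral_mono_on ((integrableOn_Ioc_inv ha).const_mul _)
        (hcont.integrableOn_Icc.mono_set Ioc_subset_Icc_self) measurableSet_Ioc fun t ht => by
          have : ‖f s‖ ≤ ‖f t‖ := hmin (Ioc_subset_Icc_self ht)
          have : 0 < t := ha.trans ht.1
          gcongr

end Ioc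

lemma logm_of_one_le {r : ℝ} (hr : 1 ≤ r) : logm r = 0 :=
  max_eq_right (neg_nonpos.2 (log_nonneg hr))

lemma logm_eq_log_max_one_sub_log {r : ℝ} (hr : 0 < r) : logm r = log (max r 1) - log r := by
  rcases le_total 1 r with h | h
  · rw [logm_of_one_le h, max_eq_left h, sub_self]
  · rw [logm, max_eq_left (neg_nonneg.2 (log_nonpos hr.le h)), max_eq_right h, log_one,
      zero_sub]

lemma jap_zero : jap 0 = 1 := by simp [jap]

lemma one_le_jap (x : ℝ) : 1 ≤ jap x :=
  one_le_sqrt.2 (le_add_of_nonneg_right (sq_nonneg x))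

lemma one_add_le_two_mul_jap (x : ℝ) : 1 + x ≤ 2 * jap x := by
  have h : 1 + x ≤ √(4 * (1 + x ^ 2)) :=
    le_sqrt_of_sq_le (by nlinarith [sq_nonneg (x - 1)])
  rwa [sqrt_mul (by norm_num), show (4 : ℝ) = 2 ^ 2 by norm_num, sqrt_sq zero_le_two] at h

lemma inv_sq_jap_logm_mul_of_one_le {t : ℝ} (ht : 1 ≤ t) (y : ℝ) :
    ((jap (logm t) * t)⁻¹) ^ 2 * y * t = y * t⁻¹ := by
  rw [logm_of_one_le ht, jap_zero, one_mul]
  field_simp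

lemma L2w_eq (g : ℝ → ℂ) : L2w g = √(2 * π) * √(∫ r in Ioi 0, ‖g r‖ ^ 2 * r) :=
  sqrt_mul (by positivity) _

namespace LocAC

variable {f : ℝ → ℂ}

lemma continuousOn_Ioi (hf : LocAC f) : ContinuousOn f (Ioi 0) := by
  intro x (hx : 0 < x)
  obtain ⟨hint, hrep⟩ := hf (x / 2) (2 * x) (by positivity) (by linarith)
  have hIcc : ContinuousOn f (Icc (x / 2) (2 * x)) := by
    have hprim := intervalIntegral.continuousOn_primitive hint
    refine ((continuousOn_const (c := f (x / 2))).add hprim).congr fun y hy => ?_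
    rw [hrep y hy, intervalIntegral.integral_of_le hy.1]
    rfl
  exact (hIcc.continuousAt (Icc_mem_nhds (by linarith) (by linarith))).continuousWithinAt

lemma norm_sub_le (hf : LocAC f)
    (h1 : IntegrableOn (fun r => ‖deriv f r‖ ^ 2 * r) (Ioi 0)) {a b : ℝ} (ha : 0 < a)
    (hab : a ≤ b) :
    ‖f b - f a‖ ≤ √(∫ r in Ioi 0, ‖deriv f r‖ ^ 2 * r) * √(log (b / a)) := by
  have hsub : Ioc a b ⊆ Ioi 0 := fun t ht => ha.trans ht.1
  calc ‖f b - f a‖ = ‖∫ t in Ioc a b, deriv f t‖ := by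
        rw [(hf a b ha hab).2 b ⟨hab, le_rfl⟩, intervalIntegral.integral_of_le hab,
          add_sub_cancel_left]
    _ ≤ ∫ t in Ioc a b, ‖deriv f t‖ := norm_integral_le_integral_norm _
    _ ≤ √(∫ t in Ioc a b, ‖deriv f t‖ ^ 2 * t) * √(log (b / a)) :=
      integral_norm_le_sqrt_mul_sqrt_log ha hab (stronglyMeasurable_deriv f).aestronglyMeasurable
        (h1.mono_set hsub)
    _ ≤ √(∫ r in Ioi 0, ‖deriv f r‖ ^ 2 * r) * √(log (b / a)) := by
      gcongr
      filter_upwards [ae_restrict_mem measurableSet_Ioi] with t (ht : 0 < t)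
      positivity

lemma exists_sq_norm_mul_log_two_le (hf : LocAC f)
    (h2 : IntegrableOn (fun r => ((jap (logm r) * r)⁻¹) ^ 2 * ‖f r‖ ^ 2 * r) (Ioi 0)) {c : ℝ}
    (hc : 1 ≤ c) :
    ∃ s ∈ Icc c (2 * c),
      ‖f s‖ ^ 2 * log 2 ≤ ∫ r in Ioi 0, ((jap (logm r) * r)⁻¹) ^ 2 * ‖f r‖ ^ 2 * r := by
  have hc0 : 0 < c := one_pos.trans_le hc
  have hsub : Ioc c (2 * c) ⊆ Ioi 0 := fun t ht => hc0.trans ht.1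
  obtain ⟨s, hs, hle⟩ := exists_sq_norm_mul_log_le_integral hc0 (by linarith : c ≤ 2 * c)
    (hf.continuousOn_Ioi.mono fun t ht => hc0.trans_le ht.1)
  refine ⟨s, hs, ?_⟩
  calc ‖f s‖ ^ 2 * log 2 = ‖f s‖ ^ 2 * log (2 * c / c) := by
        rw [mul_div_cancel_right₀ _ hc0.ne']
    _ ≤ ∫ t in Ioc c (2 * c), ‖f t‖ ^ 2 * t⁻¹ := hle
    _ = ∫ t in Ioc c (2 * c), ((jap (logm t) * t)⁻¹) ^ 2 * ‖f t‖ ^ 2 * t :=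
      setIntegral_congr_fun measurableSet_Ioc fun t ht =>
        (inv_sq_jap_logm_mul_of_one_le (hc.trans ht.1.le) _).symm
    _ ≤ ∫ r in Ioi 0, ((jap (logm r) * r)⁻¹) ^ 2 * ‖f r‖ ^ 2 * r := by
      refine setIntegral_mono_set h2 ?_ hsub.eventuallyLE
      filter_upwards [ae_restrict_mem measurableSet_Ioi] with t (ht : 0 < t)
      positivity

lemma norm_le_sqrt_jap_mul (hf : LocAC f) (h1 : IntegrableOn (fun r => ‖deriv f r‖ ^ 2 * r) (Ioi 0))
    (h2 : IntegrableOn (fun r => ((jap (logm r) * r)⁻¹) ^ 2 * ‖f r‖ ^ 2 * r) (Ioi 0))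
    {r : ℝ} (hr : 0 < r) :
    ‖f r‖ ≤ √(2 * jap (logm r)) * (√(∫ r in Ioi 0, ‖deriv f r‖ ^ 2 * r) +
      √(∫ r in Ioi 0, ((jap (logm r) * r)⁻¹) ^ 2 * ‖f r‖ ^ 2 * r)) := by
  obtain ⟨s, hs, hfs⟩ := hf.exists_sq_norm_mul_log_two_le h2 (le_max_right r 1)
  have hrs : r ≤ s := (le_max_left r 1).trans hs.1
  have hj := one_le_jap (logm r)
  have hlog : log (s / r) ≤ 2 * jap (logm r) :=
    calc log (s / r) = log s - log r := log_div (hr.trans_le hrs).ne' hr.ne'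
      _ ≤ log (2 * max r 1) - log r := by gcongr; exacts [hr.trans_le hrs, hs.2]
      _ = log 2 + logm r := by
        rw [log_mul two_ne_zero (by positivity), logm_eq_log_max_one_sub_log hr]; ring
      _ ≤ 1 + logm r := by linarith [log_two_lt_d9]
      _ ≤ 2 * jap (logm r) := one_add_le_two_mul_jap _
  set I₁ := ∫ r in Ioi 0, ‖deriv f r‖ ^ 2 * r
  set I₂ := ∫ r in Ioi 0, ((jap (logm r) * r)⁻¹) ^ 2 * ‖f r‖ ^ 2 * r
  have hfs' : ‖f s‖ ≤ √(2 * jap (logm r)) * √I₂ := by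
    have hI₂ : 0 ≤ I₂ := (mul_nonneg (sq_nonneg _) (log_nonneg one_le_two)).trans hfs
    rw [← sqrt_mul (by positivity)]
    refine le_sqrt_of_sq_le ?_
    -- `‖f s‖² ≤ 2 log 2 ‖f s‖² ≤ 2 I₂ ≤ 2 ⟨log₋ r⟩ I₂`
    nlinarith [mul_le_mul_of_nonneg_right hj hI₂, log_two_gt_d9, sq_nonneg ‖f s‖]
  have hfsr : ‖f r - f s‖ ≤ √I₁ * √(2 * jap (logm r)) := by
    rw [norm_sub_rev]
    exact (hf.norm_sub_le h1 hr hrs).trans (by gcongr)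
  calc ‖f r‖ ≤ ‖f s‖ + ‖f r - f s‖ := norm_le_norm_add_norm_sub' _ _
    _ ≤ √(2 * jap (logm r)) * √I₂ + √I₁ * √(2 * jap (logm r)) := add_le_add hfs' hfsr
    _ = √(2 * jap (logm r)) * (√I₁ + √I₂) := by ring

end LocAC

/-- Weighted `L∞` estimate: `‖⟨log₋ r⟩^{-1/2} f‖_{L∞} ≲ ‖f‖_{𝓗̇¹_0}`. -/
theorem weighted_Linfty_estimate :
    ∃ C : ℝ, 0 < C ∧
      ∀ f : ℝ → ℂ, LocAC f →
        IntegrableOn (fun r => ‖deriv f r‖ ^ 2 * r) (Set.Ioi (0:ℝ)) →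
        IntegrableOn (fun r => ((jap (logm r) * r)⁻¹) ^ 2 * ‖f r‖ ^ 2 * r)
          (Set.Ioi (0:ℝ)) →
        ∀ r ∈ Set.Ioi (0:ℝ),
          (Real.sqrt (jap (logm r)))⁻¹ * ‖f r‖ ≤
            C * (L2w (deriv f)
              + L2w (fun s => (((jap (logm s) * s)⁻¹ : ℝ) : ℂ) * f s)) := by
  refine ⟨1, one_pos, fun f hf h1 h2 r hr => ?_⟩
  have hweight : (fun s => ‖(((jap (logm s) * s)⁻¹ : ℝ) : ℂ) * f s‖ ^ 2 * s) =
      fun s => ((jap (logm s) * s)⁻¹) ^ 2 * ‖f s‖ ^ 2 * s := by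
    funext s
    rw [norm_mul, Complex.norm_real, norm_eq_abs, mul_pow, sq_abs]
  rw [one_mul, L2w_eq, L2w_eq, hweight, ← mul_add,
    inv_mul_le_iff₀ (sqrt_pos.2 (one_pos.trans_le (one_le_jap _)))]
  refine (hf.norm_le_sqrt_jap_mul h1 h2 hr).trans ?_
  rw [sqrt_mul zero_le_two, mul_comm √2, mul_assoc]
  gcongr
  linarith [pi_gt_three]
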